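/- Let F be a nonzero positive semidefinite matrix on ℂ^{d_A} ⊗ ℂ^{d_B} whose partial trace over the first factor satisfies tr_A(F) = λ·1_{d_B} for some λ > 0. Then there exist a constant c > 0 and a quantum channel Λ from d_B×d_B matrices to d_A×d_A matrices such that tr(F τ) = c · tr(|φ⁺_{d_A}⟩⟨φ⁺_{d_A}| (id_{d_A} ⊗ Λ)(τ)) for every matrix τ on ℂ^{d_A} ⊗ ℂ^{d_B}, where |φ⁺_{d_A}⟩ = (1/√d_A) Σ_{n=0}^{d_A−1} |n⟩ ⊗ |n⟩. -/

import Mathlib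

/-! Take `Λ X := (tr_B (G (1 ⊗ X)))ᵀ` with `G = λ⁻¹ F`. Then
`tr (F τ) = d_A λ ⟨φ⁺| (id ⊗ Λ) τ |φ⁺⟩` is an index computation, `tr Λ(X) = tr (tr_A(G) X) = tr X`,
and writing `G = Sᴴ S`, the rows of `S` reshaped to `d_A × d_B` matrices are Kraus operators
of `Λ`, so `Λ` is completely positive. -/

open scoped ComplexOrder Kronecker
open Matrix

noncomputable section

/-- Square complex matrices of size `d`. -/
abbrev Mat (d : ℕ) : Type := Matrix (Fin d) (Fin d) ℂ

/-- Square complex matrices on the bipartite space `ℂ^dA ⊗ ℂ^dB`. -/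
abbrev BMat (dA dB : ℕ) : Type := Matrix (Fin dA × Fin dB) (Fin dA × Fin dB) ℂ

/-- A quantum state: a positive semidefinite matrix of unit trace. -/
def IsState {n : Type*} [Fintype n] (ρ : Matrix n n ℂ) : Prop :=
  ρ.PosSemidef ∧ ρ.trace = 1

/-- Trace norm `‖A‖₁ = tr √(Aᴴ A)`. -/
noncomputable def traceNorm {n : Type*} [Fintype n] [DecidableEq n] (A : Matrix n n ℂ) : ℝ :=
  (((Matrix.posSemidef_conjTranspose_mul_self A).1.eigenvectorUnitary.1 *
      Matrix.diagonal (((↑) : ℝ → ℂ) ∘ (√·) ∘ (Matrix.posSemidef_conjTranspose_mul_self A).1.eigenvalues) *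
      (star (Matrix.posSemidef_conjTranspose_mul_self A).1.eigenvectorUnitary :
        Matrix n n ℂ)).trace).re

/-- Operator (spectral) norm of a square complex matrix. -/
noncomputable def opNorm {n : Type*} [Fintype n] [DecidableEq n] (A : Matrix n n ℂ) : ℝ :=
  ‖LinearMap.toContinuousLinearMap (Matrix.toEuclideanLin A)‖

/-- The partial action `id_{dA} ⊗ Λ` of a map `Λ` on block matrices. -/
def idTensor {dA dB dC : ℕ} (Λ : Mat dB → Mat dC) (ρ : BMat dA dB) : BMat dA dC :=
  fun p q => Λ (fun i j => ρ (p.1, i) (q.1, j)) p.2 q.2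

/-- `Λ` is `k`-positive: `id_k ⊗ Λ` preserves positive semidefiniteness. -/
def kPositive (k : ℕ) {dB dC : ℕ} (Λ : Mat dB → Mat dC) : Prop :=
  ∀ ρ : BMat k dB, ρ.PosSemidef → (idTensor Λ ρ).PosSemidef

/-- Completely positive: `k`-positive for every `k`. -/
def CompletelyPositive {dB dC : ℕ} (Λ : Mat dB → Mat dC) : Prop :=
  ∀ k : ℕ, kPositive k Λ

/-- Trace-preserving map. -/
def TracePreserving {dB dC : ℕ} (Λ : Mat dB → Mat dC) : Prop :=
  ∀ X : Mat dB, (Λ X).trace = X.trace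

/-- A quantum channel: completely positive and trace-preserving linear map. -/
def IsChannel {dB dC : ℕ} (Λ : Mat dB →ₗ[ℂ] Mat dC) : Prop :=
  CompletelyPositive (⇑Λ) ∧ TracePreserving (⇑Λ)

/-- Schmidt rank of a bipartite vector: the minimal number of product terms in a
decomposition `ψ = Σ_t a_t ⊗ b_t`. -/
def SchmidtRank {dA dB : ℕ} (ψ : Fin dA × Fin dB → ℂ) : ℕ :=
  sInf {r : ℕ | ∃ (a : Fin r → Fin dA → ℂ) (b : Fin r → Fin dB → ℂ),
    ∀ i j, ψ (i, j) = ∑ t, a t i * b t j}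

/-- The Schmidt number of `ρ` is at most `k`: there is a pure-state decomposition
`ρ = Σ_i p_i |ψ_i⟩⟨ψ_i|` with all Schmidt ranks at most `k`. -/
def SchmidtNumberLE {dA dB : ℕ} (ρ : BMat dA dB) (k : ℕ) : Prop :=
  ∃ (n : ℕ) (p : Fin n → ℝ) (ψ : Fin n → (Fin dA × Fin dB → ℂ)),
    (∀ i, 0 ≤ p i) ∧ (∀ i, ∑ x, ‖ψ i x‖ ^ 2 = 1) ∧
    (∀ i, SchmidtRank (ψ i) ≤ k) ∧
    ρ = ∑ i, (p i : ℂ) • Matrix.vecMulVec (ψ i) (star (ψ i))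

/-- The (generalized) Schmidt-number robustness `R_{S_k}`. -/
noncomputable def robustness {dA dB : ℕ} (k : ℕ) (ρ : BMat dA dB) : ℝ :=
  sInf {R : ℝ | 0 ≤ R ∧ ∃ σ τ : BMat dA dB,
    IsState σ ∧ SchmidtNumberLE σ k ∧ IsState τ ∧
    ρ = ((1 + R : ℝ) : ℂ) • σ - (R : ℂ) • τ}

/-- Partial trace over the first tensor factor. -/
def ptraceFirst {dA dB : ℕ} (ρ : BMat dA dB) : Mat dB :=
  fun i j => ∑ a : Fin dA, ρ (a, i) (a, j)

/-- Partial trace over the second tensor factor. -/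
def ptraceSecond {dA dB : ℕ} (ρ : BMat dA dB) : Mat dA :=
  fun a b => ∑ i : Fin dB, ρ (a, i) (b, i)

/-- Embed a `BMat dA d` as the top-left block (in the second factor) of a `BMat dA (d+1)`. -/
def padSnd {dA d : ℕ} (M : BMat dA d) : BMat dA (d + 1) :=
  fun p q =>
    if h : (p.2 : ℕ) < d ∧ (q.2 : ℕ) < d then M (p.1, ⟨p.2, h.1⟩) (q.1, ⟨q.2, h.2⟩) else 0

/-- The shift unitary `X|n⟩ = |n+1 mod d⟩`. -/
def shiftMat (d : ℕ) : Mat d :=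
  fun i j => if (i : ℕ) = ((j : ℕ) + 1) % d then 1 else 0

/-- The clock unitary `Z|n⟩ = e^{2πin/d}|n⟩`. -/
def clockMat (d : ℕ) : Mat d :=
  fun i j => if i = j then Complex.exp (2 * Real.pi * Complex.I * (i : ℕ) / d) else 0

/-- The Heisenberg-Weyl unitary `X^k Z^l`. -/
def heisenbergU (d k l : ℕ) : Mat d := shiftMat d ^ k * clockMat d ^ l

/-- The maximally entangled unit vector `|φ⁺⟩ = (1/√d) Σ_n |n⟩ ⊗ |n⟩`. -/
def phiPlus (d : ℕ) : Fin d × Fin d → ℂ :=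
  fun p => if p.1 = p.2 then ((1 / Real.sqrt d : ℝ) : ℂ) else 0

/-- The projection `|φ⁺⟩⟨φ⁺|`. -/
def phiProj (d : ℕ) : BMat d d := Matrix.vecMulVec (phiPlus d) (star (phiPlus d))

/-- The Bell basis projection `M_{k,l} = (1 ⊗ X^k Z^l)|φ⁺⟩⟨φ⁺|(1 ⊗ X^k Z^l)ᴴ`. -/
def bellProj (d k l : ℕ) : BMat d d :=
  ((1 : Mat d) ⊗ₖ heisenbergU d k l) * phiProj d * ((1 : Mat d) ⊗ₖ heisenbergU d k l)ᴴ

/-- The canonical inclusion isometry `ℂ^d → ℂ^D`. -/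
def inclMat (d D : ℕ) : Matrix (Fin D) (Fin d) ℂ :=
  fun i j => if (i : ℕ) = (j : ℕ) then 1 else 0

/-- Optimal guessing probability for the discrimination of the (sub)channels `Λ i`
applied with a priori probabilities `p i`, using the input state `ρ`. -/
noncomputable def pguess {dA dB D N : ℕ} (p : Fin N → ℝ) (Λ : Fin N → (Mat dB → Mat D))
    (ρ : BMat dA dB) : ℝ :=
  sSup {x : ℝ | ∃ M : Fin N → Matrix (Fin dA × Fin D) (Fin dA × Fin D) ℂ,
    (∀ i, (M i).PosSemidef) ∧ (∑ i, M i) = 1 ∧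
    x = ∑ i, p i * ((M i * idTensor (Λ i) ρ).trace).re}

/-- Optimal guessing probability over all input states of Schmidt number at most `k`. -/
noncomputable def pguessK (dA : ℕ) {dB D N : ℕ} (k : ℕ) (p : Fin N → ℝ)
    (Λ : Fin N → (Mat dB → Mat D)) : ℝ :=
  sSup {x : ℝ | ∃ σ : BMat dA dB, IsState σ ∧ SchmidtNumberLE σ k ∧ x = pguess p Λ σ}

end

section Kraus

variable {dB dC : ℕ} {ι : Type*} [Fintype ι]

def krausMap (K : ι → Matrix (Fin dC) (Fin dB) ℂ) (X : Mat dB) : Mat dC :=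
  ∑ m, K m * X * (K m)ᴴ

theorem idTensor_krausMap {k : ℕ} (K : ι → Matrix (Fin dC) (Fin dB) ℂ) (ρ : BMat k dB) :
    idTensor (krausMap K) ρ = ∑ m, ((1 : Mat k) ⊗ₖ K m) * ρ * ((1 : Mat k) ⊗ₖ K m)ᴴ := by
  ext ⟨p₁, p₂⟩ ⟨q₁, q₂⟩
  change krausMap K (Matrix.of fun i j => ρ (p₁, i) (q₁, j)) p₂ q₂ = _
  simp only [krausMap, Matrix.sum_apply]
  refine Finset.sum_congr rfl fun m _ => ?_
  simp [Matrix.mul_apply, Fintype.sum_prod_type, Matrix.one_apply, Finset.sum_mul, apply_ite,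
    Finset.sum_ite_irrel]

theorem completelyPositive_krausMap (K : ι → Matrix (Fin dC) (Fin dB) ℂ) :
    CompletelyPositive (krausMap K) := fun _ ρ hρ => by
  rw [idTensor_krausMap]
  exact posSemidef_sum _ fun _ _ => hρ.mul_mul_conjTranspose_same _

end Kraus

section Choi

variable {dA dB : ℕ}

-- `choiMap F X = (tr_B (F (1 ⊗ X)))ᵀ`
def choiMap (F : BMat dA dB) : Mat dB →ₗ[ℂ] Mat dA where
  toFun X := Matrix.of fun j i => ∑ a, ∑ b, F (i, a) (j, b) * X b a
  map_add' X Y := by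
    ext
    simp [mul_add, Finset.sum_add_distrib]
  map_smul' c X := by
    ext
    simp [Finset.mul_sum, mul_left_comm]

theorem choiMap_apply (F : BMat dA dB) (X : Mat dB) (j i : Fin dA) :
    choiMap F X j i = ∑ a, ∑ b, F (i, a) (j, b) * X b a := rfl

theorem choiMap_conjTranspose_mul_self {ι : Type*} [Fintype ι]
    (S : Matrix ι (Fin dA × Fin dB) ℂ) :
    ⇑(choiMap (Sᴴ * S)) = krausMap fun m => Matrix.of fun j b => S m (j, b) := by
  ext X j i
  simp only [choiMap_apply, krausMap, Matrix.sum_apply, Matrix.mul_apply,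
    Matrix.conjTranspose_apply, Matrix.of_apply, Finset.sum_mul]
  refine ((Finset.sum_congr rfl fun a _ => Finset.sum_comm).trans Finset.sum_comm).trans ?_
  refine Finset.sum_congr rfl fun m _ => Finset.sum_congr rfl fun a _ =>
    Finset.sum_congr rfl fun b _ => ?_
  ring

theorem completelyPositive_choiMap {F : BMat dA dB} (hF : F.PosSemidef) :
    CompletelyPositive (choiMap F) := by
  open scoped MatrixOrder in
  obtain ⟨S, rfl⟩ := CStarAlgebra.nonneg_iff_eq_star_mul_self.mp hF.nonneg
  rw [star_eq_conjTranspose, choiMap_conjTranspose_mul_self]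
  exact completelyPositive_krausMap _

theorem trace_choiMap (F : BMat dA dB) (X : Mat dB) :
    (choiMap F X).trace = (ptraceFirst F * X).trace := by
  simp only [Matrix.trace, Matrix.diag_apply, choiMap_apply, ptraceFirst, Matrix.mul_apply,
    Finset.sum_mul]
  exact Finset.sum_comm.trans (Finset.sum_congr rfl fun _ _ => Finset.sum_comm)

theorem tracePreserving_choiMap {F : BMat dA dB} (hF : ptraceFirst F = 1) :
    TracePreserving (choiMap F) := fun X => by
  rw [trace_choiMap, hF, one_mul]

theorem ptraceFirst_smul (c : ℂ) (F : BMat dA dB) : ptraceFirst (c • F) = c • ptraceFirst F := by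
  ext
  simp [ptraceFirst, Finset.mul_sum]

theorem trace_phiProj_mul {d : ℕ} (M : BMat d d) :
    (phiProj d * M).trace = (d : ℂ)⁻¹ * ∑ i, ∑ j, M (i, i) (j, j) := by
  simp only [Matrix.trace, Matrix.diag_apply, Matrix.mul_apply, phiProj, Matrix.vecMulVec_apply,
    phiPlus, Pi.star_apply, Fintype.sum_prod_type, apply_ite star, star_zero, ite_mul, mul_ite,
    zero_mul, mul_zero, Finset.sum_ite_eq, Finset.sum_ite_irrel, Finset.mem_univ, if_true,
    Finset.sum_const_zero]
  have hnorm : ((1 / √d : ℝ) : ℂ) * star ((1 / √d : ℝ) : ℂ) = (d : ℂ)⁻¹ := by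
    rw [Complex.star_def, Complex.conj_ofReal, ← Complex.ofReal_mul, one_div, ← mul_inv,
      Real.mul_self_sqrt d.cast_nonneg, Complex.ofReal_inv, Complex.ofReal_natCast]
  simp_rw [hnorm, Finset.mul_sum]
  exact Finset.sum_comm

theorem idTensor_choiMap_apply (F τ : BMat dA dB) (j i j' i' : Fin dA) :
    idTensor (choiMap F) τ (j, j') (i, i') = ∑ a, ∑ b, F (i', a) (j', b) * τ (j, b) (i, a) :=
  rfl

theorem trace_phiProj_mul_idTensor_choiMap (F τ : BMat dA dB) :
    (phiProj dA * idTensor (choiMap F) τ).trace = (dA : ℂ)⁻¹ * (F * τ).trace := by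
  rw [trace_phiProj_mul]
  congr 1
  simp only [idTensor_choiMap_apply, Matrix.trace, Matrix.diag_apply, Matrix.mul_apply,
    Fintype.sum_prod_type]
  rw [Finset.sum_comm]
  exact Finset.sum_congr rfl fun j _ => Finset.sum_comm

end Choi

/-- a nonzero positive semidefinite `F` with `tr_A F ∝ 1` is, up to a
positive constant, the Choi operator functional `τ ↦ tr(|φ⁺⟩⟨φ⁺| (id ⊗ Λ)(τ))` of a
quantum channel `Λ`. -/
theorem stmt17 {dA dB : ℕ} (F : BMat dA dB) (hF : F.PosSemidef) (hF0 : F ≠ 0)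
    (lam : ℝ) (hlam : 0 < lam) (hptr : ptraceFirst F = (lam : ℂ) • (1 : Mat dB)) :
    ∃ (c : ℝ) (Λ : Mat dB →ₗ[ℂ] Mat dA), 0 < c ∧ IsChannel Λ ∧
      ∀ τ : BMat dA dB,
        (F * τ).trace = (c : ℂ) * (phiProj dA * idTensor (⇑Λ) τ).trace := by
  have hdA : 0 < dA := Nat.pos_of_ne_zero fun h => hF0 <| by
    subst h
    exact Matrix.ext fun p => p.1.elim0
  have hlamC : (lam : ℂ) ≠ 0 := by exact_mod_cast hlam.ne'
  refine ⟨dA * lam, choiMap ((lam : ℂ)⁻¹ • F), mul_pos (by exact_mod_cast hdA) hlam,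
    ⟨completelyPositive_choiMap (hF.smul ?_), tracePreserving_choiMap ?_⟩, fun τ => ?_⟩
  · exact inv_nonneg.mpr (by exact_mod_cast hlam.le)
  · rw [ptraceFirst_smul, hptr, smul_smul, inv_mul_cancel₀ hlamC, one_smul]
  · rw [trace_phiProj_mul_idTensor_choiMap, Matrix.smul_mul, Matrix.trace_smul, smul_eq_mul]
    push_cast
    field_simp
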